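/- Let f: ℝ^n → ℝ be twice differentiable with L₂-Lipschitz Hessian, x ∈ ℝ^n, M ≥ L₂, and let h* be a global minimizer of the model m(h) = f(x) + ⟨∇f(x)_[S], h⟩ + (1/2)⟨∇²f(x)_[S] h, h⟩ + (M/6)‖h_[S]‖³ over vectors h supported on a coordinate set S ⊆ [n]. Then f(x) − f(x + h*) ≥ (M/12) ‖h*‖³. -/

import Mathlib

open scoped RealInnerProductSpace

/-!
Write `a = ⟨∇f(x), h*⟩`, `b = ⟨∇²f(x) h*, h*⟩` and `r = ‖h*‖`. Since `t • h*` is an admissible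
competitor for every real `t`, the function `t ↦ t a + t² b / 2 + |t|³ M r³ / 6` is minimal at
`t = 1`. Comparing with `t = -1` gives `a ≤ 0`, and stationarity at `t = 1` gives
`a + b + M r³ / 2 = 0`. The cubic Taylor bound for a function with `L₂`-Lipschitz Hessian, obtained
by integrating the Lipschitz estimate twice along the segment, then yields
`f(x + h*) - f(x) ≤ a + b / 2 + L₂ r³ / 6 = a / 2 - M r³ / 4 + L₂ r³ / 6 ≤ -M r³ / 12`.
-/

/-- Zero out the coordinates of `v` outside `S`. -/
noncomputable def restrict {n : ℕ} (S : Finset (Fin n)) (v : EuclideanSpace ℝ (Fin n)) :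
    EuclideanSpace ℝ (Fin n) := WithLp.toLp 2 (fun i => if i ∈ S then v i else 0)

theorem abs_le_of_abs_deriv_le_mul_pow {u u' : ℝ → ℝ} {C : ℝ} (k : ℕ)
    (hu : ∀ t, HasDerivAt u (u' t) t) (hu0 : u 0 = 0)
    (hbound : ∀ t, 0 ≤ t → |u' t| ≤ C * t ^ k) {t : ℝ} (ht : 0 ≤ t) :
    |u t| ≤ C / (k + 1) * t ^ (k + 1) := by
  have hB : ∀ s, HasDerivAt (fun s => C / (k + 1) * s ^ (k + 1)) (C * s ^ k) s := fun s => by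
    refine ((hasDerivAt_pow (k + 1) s).const_mul (C / (k + 1))).congr_deriv ?_
    push_cast
    field_simp
  exact image_norm_le_of_norm_deriv_right_le_deriv_boundary
    (fun s _ => (hu s).continuousAt.continuousWithinAt) (fun s _ => (hu s).hasDerivWithinAt)
    (by simp [hu0]) hB (fun s hs => hbound s hs.1) ⟨ht, le_rfl⟩

theorem abs_sub_taylor_le_of_lipschitz_fderiv_fderiv {E : Type*} [NormedAddCommGroup E]
    [NormedSpace ℝ E] {f : E → ℝ} {L : ℝ} (hf : ContDiff ℝ 2 f)
    (hLip : ∀ x y, ‖fderiv ℝ (fderiv ℝ f) x - fderiv ℝ (fderiv ℝ f) y‖ ≤ L * ‖x - y‖) (x h : E) :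
    |f (x + h) - f x - fderiv ℝ f x h - 1 / 2 * fderiv ℝ (fderiv ℝ f) x h h| ≤
      L / 6 * ‖h‖ ^ 3 := by
  set D2 := fderiv ℝ (fderiv ℝ f)
  have hdf : Differentiable ℝ f := hf.differentiable (by norm_num)
  have hdf' : Differentiable ℝ (fderiv ℝ f) :=
    (hf.fderiv_right (m := 1) (by norm_num)).differentiable (by norm_num)
  have hline : ∀ t : ℝ, HasDerivAt (fun t : ℝ => x + t • h) h t := fun t => by
    simpa using ((hasDerivAt_id t).smul_const h).const_add x
  have hg : ∀ t : ℝ, HasDerivAt (fun t => f (x + t • h)) (fderiv ℝ f (x + t • h) h) t :=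
    fun t => hdf.differentiableAt.hasFDerivAt.comp_hasDerivAt t (hline t)
  have hg' : ∀ t : ℝ, HasDerivAt (fun t => fderiv ℝ f (x + t • h) h) (D2 (x + t • h) h h) t :=
    fun t => (ContinuousLinearMap.apply ℝ ℝ h).hasFDerivAt.comp_hasDerivAt t
      (hdf'.differentiableAt.hasFDerivAt.comp_hasDerivAt t (hline t))
  have hg'' : ∀ t, 0 ≤ t → |D2 (x + t • h) h h - D2 x h h| ≤ L * ‖h‖ ^ 3 * t ^ 1 := by
    intro t ht
    calc |D2 (x + t • h) h h - D2 x h h| = ‖(D2 (x + t • h) - D2 x) h h‖ := by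
          rw [Real.norm_eq_abs]; rfl
      _ ≤ ‖D2 (x + t • h) - D2 x‖ * ‖h‖ * ‖h‖ := (D2 (x + t • h) - D2 x).le_opNorm₂ h h
      _ ≤ L * ‖x + t • h - x‖ * ‖h‖ * ‖h‖ := by gcongr; exact hLip _ _
      _ = L * ‖h‖ ^ 3 * t ^ 1 := by
          rw [add_sub_cancel_left, norm_smul, Real.norm_of_nonneg ht]; ring
  have hfirst : ∀ t, 0 ≤ t →
      |fderiv ℝ f (x + t • h) h - fderiv ℝ f x h - t * D2 x h h| ≤ L * ‖h‖ ^ 3 / 2 * t ^ 2 :=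
    fun t ht => by
      convert abs_le_of_abs_deriv_le_mul_pow 1
        (u := fun t => fderiv ℝ f (x + t • h) h - fderiv ℝ f x h - t * D2 x h h)
        (fun t => (((hg' t).sub_const _).sub ((hasDerivAt_id t).mul_const _)).congr_deriv
          (by simp)) (by simp) hg'' ht using 2
      norm_num
  convert abs_le_of_abs_deriv_le_mul_pow 2
    (u := fun t => f (x + t • h) - f x - t * fderiv ℝ f x h - 1 / 2 * t ^ 2 * D2 x h h)
    (fun t => ((((hg t).sub_const _).sub ((hasDerivAt_id t).mul_const _)).sub
      (((hasDerivAt_pow 2 t).const_mul (1 / 2)).mul_const _)).congr_deriv (by simp))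
    (by simp) hfirst zero_le_one using 1
  · simp
  · norm_num; ring

noncomputable def cubicRayModel (a b c t : ℝ) : ℝ := t * a + t ^ 2 * (b / 2) + |t| ^ 3 * c

theorem nonpos_of_cubicRayModel_min {a b c : ℝ}
    (hmin : ∀ t, cubicRayModel a b c 1 ≤ cubicRayModel a b c t) : a ≤ 0 := by
  have := hmin (-1)
  norm_num [cubicRayModel] at this
  linarith

theorem stationary_of_cubicRayModel_min {a b c : ℝ}
    (hmin : ∀ t, cubicRayModel a b c 1 ≤ cubicRayModel a b c t) : a + b + 3 * c = 0 := by
  set p : ℝ → ℝ := fun t => t * a + t ^ 2 * (b / 2) + t ^ 3 * c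
  have hloc : IsLocalMin p 1 := by
    filter_upwards [Ioi_mem_nhds one_pos] with t ht
    have := hmin t
    simp only [cubicRayModel, abs_one, abs_of_pos (Set.mem_Ioi.mp ht)] at this
    simpa [p] using this
  refine hloc.hasDerivAt_eq_zero ?_
  refine ((((hasDerivAt_id 1).mul_const a).add ((hasDerivAt_pow 2 1).mul_const (b / 2))).add
    ((hasDerivAt_pow 3 1).mul_const c)).congr_deriv ?_
  norm_num
  ring

section Restrict

variable {n : ℕ} (S : Finset (Fin n))

theorem restrict_eq_self {v : EuclideanSpace ℝ (Fin n)} (hv : ∀ i ∉ S, v i = 0) :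
    restrict S v = v := by
  ext i
  by_cases hi : i ∈ S <;> simp [restrict, hi, hv]

theorem inner_restrict_left (u v : EuclideanSpace ℝ (Fin n)) :
    ⟪restrict S u, v⟫ = ⟪u, restrict S v⟫ := by
  simp only [PiLp.inner_apply, restrict]
  refine Finset.sum_congr rfl fun i _ => ?_
  by_cases hi : i ∈ S <;> simp [hi]

end Restrict

theorem model_decrease_general {n : ℕ} (f : EuclideanSpace ℝ (Fin n) → ℝ) (L₂ M : ℝ)
    (hM : L₂ ≤ M)
    (hf : ContDiff ℝ 2 f)
    (hLip : ∀ x y : EuclideanSpace ℝ (Fin n),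
      ‖fderiv ℝ (fun z => fderiv ℝ f z) x - fderiv ℝ (fun z => fderiv ℝ f z) y‖ ≤ L₂ * ‖x - y‖)
    (S : Finset (Fin n)) (x hs : EuclideanSpace ℝ (Fin n))
    (hsupp : ∀ i ∉ S, hs i = 0)
    (hmin : ∀ h : EuclideanSpace ℝ (Fin n), (∀ i ∉ S, h i = 0) →
      f x + ⟪restrict S (gradient f x), hs⟫
          + (1 / 2) * ((fderiv ℝ (fun z => fderiv ℝ f z) x (restrict S hs)) (restrict S hs))
          + (M / 6) * ‖restrict S hs‖ ^ 3
        ≤ f x + ⟪restrict S (gradient f x), h⟫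
          + (1 / 2) * ((fderiv ℝ (fun z => fderiv ℝ f z) x (restrict S h)) (restrict S h))
          + (M / 6) * ‖restrict S h‖ ^ 3) :
    f x - f (x + hs) ≥ (M / 12) * ‖hs‖ ^ 3 := by
  set a := fderiv ℝ f x hs
  set b := fderiv ℝ (fderiv ℝ f) x hs hs
  have hsupp_smul : ∀ t : ℝ, ∀ i ∉ S, (t • hs) i = 0 := fun t i hi => by simp [hsupp i hi]
  have hgrad : ⟪restrict S (gradient f x), hs⟫ = a := by
    rw [inner_restrict_left, restrict_eq_self S hsupp, gradient,
      InnerProductSpace.toDual_symm_apply]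
  have hray : ∀ t, cubicRayModel a b (M / 6 * ‖hs‖ ^ 3) 1 ≤
      cubicRayModel a b (M / 6 * ‖hs‖ ^ 3) t := fun t => by
    have := hmin (t • hs) (hsupp_smul t)
    rw [restrict_eq_self S hsupp, restrict_eq_self S (hsupp_smul t), real_inner_smul_right,
      hgrad, norm_smul] at this
    simp only [map_smul, FunLike.coe_smul, Pi.smul_apply, smul_eq_mul,
      Real.norm_eq_abs] at this
    simp only [cubicRayModel]
    linarith
  have ha := nonpos_of_cubicRayModel_min hray
  have hstat := stationary_of_cubicRayModel_min hray
  have htaylor := (abs_le.mp (abs_sub_taylor_le_of_lipschitz_fderiv_fderiv hf hLip x hs)).2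
  linarith [mul_le_mul_of_nonneg_right hM (by positivity : (0 : ℝ) ≤ ‖hs‖ ^ 3)]

/-- Model decrease: if `h*` globally minimizes the coordinate-restricted cubic model with
regularization `M ≥ L₂` over vectors supported on `S`, then
`f(x) − f(x + h*) ≥ (M/12)‖h*‖³`. -/
theorem model_decrease {n : ℕ} (f : EuclideanSpace ℝ (Fin n) → ℝ) (L₂ M : ℝ)
    (hL₂ : 0 ≤ L₂) (hM : L₂ ≤ M)
    (hf : ContDiff ℝ 2 f)
    (hLip : ∀ x y : EuclideanSpace ℝ (Fin n),
      ‖fderiv ℝ (fun z => fderiv ℝ f z) x - fderiv ℝ (fun z => fderiv ℝ f z) y‖ ≤ L₂ * ‖x - y‖)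
    (S : Finset (Fin n)) (x hs : EuclideanSpace ℝ (Fin n))
    (hsupp : ∀ i ∉ S, hs i = 0)
    (hmin : ∀ h : EuclideanSpace ℝ (Fin n), (∀ i ∉ S, h i = 0) →
      f x + ⟪restrict S (gradient f x), hs⟫
          + (1 / 2) * ((fderiv ℝ (fun z => fderiv ℝ f z) x (restrict S hs)) (restrict S hs))
          + (M / 6) * ‖restrict S hs‖ ^ 3
        ≤ f x + ⟪restrict S (gradient f x), h⟫
          + (1 / 2) * ((fderiv ℝ (fun z => fderiv ℝ f z) x (restrict S h)) (restrict S h))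
          + (M / 6) * ‖restrict S h‖ ^ 3) :
    f x - f (x + hs) ≥ (M / 12) * ‖hs‖ ^ 3 :=
  model_decrease_general f L₂ M hM hf hLip S x hs hsupp hmin
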